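/- arXiv:2103.16451 — 2 statements merged into one kernel-verified Lean document; each statement's English description precedes it below -/
import Mathlib

section
/- Let μ⁰, μ¹ be probability measures in the conditional ambiguity set B_{x₀,γ,ε}(𝔹) (defined below) where 𝔹 is a convex set of joint probability measures on 𝒳 × 𝒴. Then for any λ ∈ (0,1), the mixture λμ¹ + (1−λ)μ⁰ also belongs to B_{x₀,γ,ε}(𝔹). In other words, B_{x₀,γ,ε}(𝔹) is convex. -/
open MeasureTheory

/-- The conditional ambiguity set: probability measures `μ` on `Y` arising as the
conditional distribution of the second coordinate given that the first coordinate lies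
in `Nset`, under some joint probability measure `Q ∈ 𝔹` assigning mass at least `ε`
to the fiber `Nset × univ`. -/
def condSet {X Y : Type*} [MeasurableSpace X] [MeasurableSpace Y]
    (𝔹 : Set (Measure (X × Y))) (Nset : Set X) (ε : ℝ) : Set (Measure Y) :=
  {μ | IsProbabilityMeasure μ ∧ ∃ Q ∈ 𝔹, IsProbabilityMeasure Q ∧
    ε ≤ (Q (Nset ×ˢ Set.univ)).toReal ∧
    ∀ A : Set Y, MeasurableSet A →
      (Q (Nset ×ˢ A)).toReal = (μ A).toReal * (Q (Nset ×ˢ Set.univ)).toReal}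

/-! If `Q⁰, Q¹` witness `μ⁰, μ¹` with fiber masses `a, b`, mix them with the
weight `θ = λa / (λa + (1 - λ)b)` of `Q¹`. The fiber mass of the mixture is the convex
combination `θb + (1 - θ)a ≥ ε`, and `θ` is chosen so that its fiber is shared between
`Q¹` and `Q⁰` in the proportion `λ : 1 - λ`, making the conditional law `λμ¹ + (1 - λ)μ⁰`. -/

section Mixture

variable {Z : Type*} [MeasurableSpace Z] {t : ℝ}

lemma toReal_ofReal_smul_add_ofReal_smul_apply (ht0 : 0 ≤ t) (ht1 : t ≤ 1)
    (ν₀ ν₁ : Measure Z) [IsFiniteMeasure ν₀] [IsFiniteMeasure ν₁] (S : Set Z) :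
    ((ENNReal.ofReal t • ν₁ + ENNReal.ofReal (1 - t) • ν₀) S).toReal
      = t * (ν₁ S).toReal + (1 - t) * (ν₀ S).toReal := by
  rw [Measure.add_apply, Measure.smul_apply, Measure.smul_apply, smul_eq_mul, smul_eq_mul,
    ENNReal.toReal_add (by finiteness) (by finiteness), ENNReal.toReal_mul, ENNReal.toReal_mul,
    ENNReal.toReal_ofReal ht0, ENNReal.toReal_ofReal (sub_nonneg.2 ht1)]

lemma isProbabilityMeasure_ofReal_smul_add_ofReal_smul (ht0 : 0 ≤ t) (ht1 : t ≤ 1)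
    (ν₀ ν₁ : Measure Z) [IsProbabilityMeasure ν₀] [IsProbabilityMeasure ν₁] :
    IsProbabilityMeasure (ENNReal.ofReal t • ν₁ + ENNReal.ofReal (1 - t) • ν₀) := by
  constructor
  rw [Measure.add_apply, Measure.smul_apply, Measure.smul_apply, measure_univ, measure_univ,
    smul_eq_mul, smul_eq_mul, mul_one, mul_one, ← ENNReal.ofReal_add ht0 (sub_nonneg.2 ht1),
    add_sub_cancel, ENNReal.ofReal_one]

end Mixture

lemma exists_mixing_weight {a b lam : ℝ} (ha : 0 ≤ a) (hb : 0 ≤ b) (hlam0 : 0 ≤ lam)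
    (hlam1 : lam ≤ 1) :
    ∃ θ ∈ Set.Icc (0 : ℝ) 1, θ * b = lam * (θ * b + (1 - θ) * a) := by
  have hd_nonneg : 0 ≤ lam * a + (1 - lam) * b := by nlinarith
  rcases hd_nonneg.eq_or_lt with hd | hd
  · refine ⟨lam, ⟨hlam0, hlam1⟩, ?_⟩
    have hla : lam * a = 0 := by nlinarith
    have hlb : (1 - lam) * b = 0 := by nlinarith
    linear_combination lam * hlb - (1 - lam) * hla
  · refine ⟨lam * a / (lam * a + (1 - lam) * b), ⟨by positivity, ?_⟩, ?_⟩
    · rw [div_le_one hd]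
      nlinarith
    · field_simp
      ring

theorem stmt9_general {X Y : Type*} [MeasurableSpace X] [MeasurableSpace Y]
    (𝔹 : Set (Measure (X × Y)))
    (hconv : ∀ Q0 ∈ 𝔹, ∀ Q1 ∈ 𝔹, ∀ t : ℝ, t ∈ Set.Icc (0:ℝ) 1 →
      (ENNReal.ofReal t • Q1 + ENNReal.ofReal (1 - t) • Q0) ∈ 𝔹)
    (Nset : Set X) (ε : ℝ)
    (μ0 μ1 : Measure Y) (h0 : μ0 ∈ condSet 𝔹 Nset ε) (h1 : μ1 ∈ condSet 𝔹 Nset ε)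
    (lam : ℝ) (hlam : lam ∈ Set.Ioo (0:ℝ) 1) :
    (ENNReal.ofReal lam • μ1 + ENNReal.ofReal (1 - lam) • μ0) ∈ condSet 𝔹 Nset ε := by
  obtain ⟨hμ0, Q0, hQ0, hQ0p, hε0, hcond0⟩ := h0
  obtain ⟨hμ1, Q1, hQ1, hQ1p, hε1, hcond1⟩ := h1
  obtain ⟨θ, hθ, hθweight⟩ := exists_mixing_weight (a := (Q0 (Nset ×ˢ Set.univ)).toReal)
    (b := (Q1 (Nset ×ˢ Set.univ)).toReal) ENNReal.toReal_nonneg ENNReal.toReal_nonneg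
    hlam.1.le hlam.2.le
  have mixQ := toReal_ofReal_smul_add_ofReal_smul_apply hθ.1 hθ.2 Q0 Q1
  refine ⟨isProbabilityMeasure_ofReal_smul_add_ofReal_smul hlam.1.le hlam.2.le μ0 μ1,
    _, hconv Q0 hQ0 Q1 hQ1 θ hθ,
    isProbabilityMeasure_ofReal_smul_add_ofReal_smul hθ.1 hθ.2 Q0 Q1, ?_, fun A hA => ?_⟩
  · rw [mixQ]
    linarith [mul_le_mul_of_nonneg_left hε1 hθ.1,
      mul_le_mul_of_nonneg_left hε0 (sub_nonneg.2 hθ.2)]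
  · rw [mixQ, mixQ, toReal_ofReal_smul_add_ofReal_smul_apply hlam.1.le hlam.2.le μ0 μ1,
      hcond0 A hA, hcond1 A hA]
    linear_combination ((μ1 A).toReal - (μ0 A).toReal) * hθweight

/-- Convexity of the conditional ambiguity set: if `𝔹` is convex, then so is
`condSet 𝔹 Nset ε`. -/
theorem stmt9 {X Y : Type*} [MeasurableSpace X] [MeasurableSpace Y]
    (𝔹 : Set (Measure (X × Y)))
    (hconv : ∀ Q0 ∈ 𝔹, ∀ Q1 ∈ 𝔹, ∀ t : ℝ, t ∈ Set.Icc (0:ℝ) 1 →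
      (ENNReal.ofReal t • Q1 + ENNReal.ofReal (1 - t) • Q0) ∈ 𝔹)
    (Nset : Set X) (hNset : MeasurableSet Nset) (ε : ℝ) (hε : 0 ≤ ε)
    (μ0 μ1 : Measure Y) (h0 : μ0 ∈ condSet 𝔹 Nset ε) (h1 : μ1 ∈ condSet 𝔹 Nset ε)
    (lam : ℝ) (hlam : lam ∈ Set.Ioo (0:ℝ) 1) :
    (ENNReal.ofReal lam • μ1 + ENNReal.ofReal (1 - lam) • μ0) ∈ condSet 𝔹 Nset ε :=
  stmt9_general 𝔹 hconv Nset ε μ0 μ1 h0 h1 lam hlam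
end

section
/- Let λᵢ > 0, α ∈ ℝᵐ, ŷᵢ ∈ ℝᵐ, β ∈ ℝ, η ≥ 0, sᵢ ∈ ℝ, and I the m×m identity. The semi-infinite constraint 'for all y ∈ ℝᵐ: (yᵀα − β)² − η·yᵀα − λᵢ‖y − ŷᵢ‖₂² ≤ sᵢ' holds if and only if the quadratic form constraint 'yᵀ(ααᵀ − λᵢI)y + (2λᵢŷᵢ − (2β+η)α)ᵀy + β² − λᵢ‖ŷᵢ‖₂² − sᵢ ≤ 0 for all y ∈ ℝᵐ' holds, which in turn (for a quadratic function) is equivalent to the matrix condition that the (m+1)×(m+1) symmetric matrix [[λᵢI − ααᵀ, (β + η/2)α − λᵢŷᵢ], [((β + η/2)α − λᵢŷᵢ)ᵀ, sᵢ + λᵢ‖ŷᵢ‖₂² − β²]] is positive semi-definite. -/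
/-!
Both constraints say that one quadratic function `q y = yᵀ M y + 2 wᵀ y + c`, with
`M = ααᵀ - λI`, `w = λŷ - (β + η/2) α` and `c = β² - λ‖ŷ‖² - s`, is nonpositive; this is just
an expansion of the squares. For the matrix condition, homogenize: `q ≤ 0` everywhere iff
`xᵀ M x + 2 t wᵀ x + t² c ≤ 0` for all `(x, t)`. For `t ≠ 0` this is `t² q (x / t)`, and for
`t = 0` it says `xᵀ M x ≤ 0`, which holds because `r ↦ q (r x)` is a quadratic polynomial
bounded above. The homogenized form is minus the quadratic form of the block matrix.
-/

open Matrix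

lemma nonpos_of_forall_sq_mul_add_mul_add_nonpos {a b c : ℝ}
    (h : ∀ r : ℝ, r ^ 2 * a + r * b + c ≤ 0) : a ≤ 0 := by
  by_contra! ha
  -- at `±r` with `r ^ 2 * a = |c| + 1` the linear terms cancel
  obtain ⟨r, hr⟩ : ∃ r : ℝ, r ^ 2 * a = |c| + 1 :=
    ⟨√((|c| + 1) / a), by rw [Real.sq_sqrt (by positivity), div_mul_cancel₀ _ ha.ne']⟩
  linarith [h r, h (-r), neg_abs_le c, neg_sq r]

theorem QuadraticMap.forall_add_nonpos_iff_forall_homogenized {E : Type*} [AddCommGroup E]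
    [Module ℝ E] (Q : QuadraticMap ℝ E ℝ) (b : E →ₗ[ℝ] ℝ) (c : ℝ) :
    (∀ y, Q y + 2 * b y + c ≤ 0) ↔ ∀ x (t : ℝ), Q x + 2 * t * b x + t ^ 2 * c ≤ 0 := by
  refine ⟨fun h x t => ?_, fun h y => by simpa using h y 1⟩
  have hscaled : ∀ r : ℝ, r ^ 2 * Q x + r * (2 * b x) + c ≤ 0 := fun r => by
    simpa [QuadraticMap.map_smul, mul_left_comm, pow_two] using h (r • x)
  rcases eq_or_ne t 0 with rfl | ht
  · simpa using nonpos_of_forall_sq_mul_add_mul_add_nonpos hscaled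
  · have := mul_nonpos_of_nonneg_of_nonpos (sq_nonneg t) (hscaled t⁻¹)
    field_simp at this
    linarith

namespace Matrix

variable {n R : Type*} [Fintype n]

lemma sum_elim_dotProduct_fromBlocks_mulVec [CommRing R] (A : Matrix n n R) (v : n → R) (d : R)
    (u : n → R) (t : R) :
    Sum.elim u (fun (_ : Fin 1) => t) ⬝ᵥ
        fromBlocks A (of fun i (_ : Fin 1) => v i) (of fun _ j => v j) (of fun _ _ => d) *ᵥ
          Sum.elim u (fun _ => t) =
      u ⬝ᵥ A *ᵥ u + 2 * t * (v ⬝ᵥ u) + t ^ 2 * d := by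
  have hcross : ∑ i, u i * (v i * t) = t * (v ⬝ᵥ u) := by
    rw [dotProduct, Finset.mul_sum]
    exact Finset.sum_congr rfl fun _ _ => by ring
  simp only [dotProduct_block, fromBlocks_mulVec, Sum.elim_comp_inl, Sum.elim_comp_inr,
    dotProduct_add]
  simp only [dotProduct, mulVec, of_apply, Fin.sum_univ_one] at hcross ⊢
  rw [hcross]
  ring

theorem posSemidef_fromBlocks_neg_iff (M : Matrix n n ℝ) (hM : M.IsHermitian) (w : n → ℝ)
    (c : ℝ) :
    (fromBlocks (-M) (of fun i (_ : Fin 1) => -w i) (of fun _ j => -w j)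
        (of fun _ _ => -c)).PosSemidef ↔
      ∀ y, y ⬝ᵥ M *ᵥ y + 2 * (w ⬝ᵥ y) + c ≤ 0 := by
  have hherm : (fromBlocks (-M) (of fun i (_ : Fin 1) => -w i) (of fun _ j => -w j)
      (of fun _ _ => -c)).IsHermitian :=
    hM.neg.fromBlocks (by ext; simp) (by ext; simp)
  have hsplit : ∀ x : n ⊕ Fin 1 → ℝ, x = Sum.elim (x ∘ Sum.inl) (fun _ => x (Sum.inr 0)) :=
    fun x => by ext (i | i) <;> simp [Subsingleton.elim (α := Fin 1) _ 0]
  have hform : ∀ u t, Sum.elim u (fun (_ : Fin 1) => t) ⬝ᵥ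
      fromBlocks (-M) (of fun i (_ : Fin 1) => -w i) (of fun _ j => -w j) (of fun _ _ => -c) *ᵥ
        Sum.elim u (fun _ => t) = -(u ⬝ᵥ M *ᵥ u + 2 * t * (w ⬝ᵥ u) + t ^ 2 * c) := fun u t => by
    have := sum_elim_dotProduct_fromBlocks_mulVec (-M) (-w) (-c) u t
    simp only [Pi.neg_apply, neg_mulVec, dotProduct_neg, neg_dotProduct] at this
    linarith
  have hhom := QuadraticMap.forall_add_nonpos_iff_forall_homogenized
    (LinearMap.BilinMap.toQuadraticMap ((dotProductBilin ℝ ℝ).compl₂ M.mulVecLin))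
    (dotProductBilin ℝ ℝ w) c
  simp only [LinearMap.BilinMap.toQuadraticMap_apply, LinearMap.compl₂_apply, mulVecLin_apply,
    dotProductBilin_apply_apply] at hhom
  rw [posSemidef_iff_dotProduct_mulVec, hhom, and_iff_right hherm]
  refine ⟨fun h u t => ?_, fun h x => ?_⟩
  · have := h (Sum.elim u fun _ => t)
    rw [star_trivial, hform] at this
    linarith
  · rw [star_trivial, hsplit x, hform]
    linarith [h (x ∘ Sum.inl) (x (Sum.inr 0))]

end Matrix

section MeanVariance

variable {n : Type*} [Fintype n] [DecidableEq n]

lemma meanVariance_sub_eq_dotProduct_mulVec_add (lam β η s : ℝ) (α yh y : n → ℝ) :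
    ((∑ i, y i * α i) - β) ^ 2 - η * (∑ i, y i * α i) - lam * (∑ i, (y i - yh i) ^ 2) - s =
      y ⬝ᵥ (vecMulVec α α - lam • 1) *ᵥ y + 2 * ((lam • yh - (β + η / 2) • α) ⬝ᵥ y)
        + (β ^ 2 - lam * (∑ i, (yh i) ^ 2) - s) := by
  have hdist : ∑ i, (y i - yh i) ^ 2 = (y - yh) ⬝ᵥ (y - yh) := by simp [dotProduct, sq]
  have hyh : ∑ i, (yh i) ^ 2 = yh ⬝ᵥ yh := by simp [dotProduct, sq]
  have hyα : ∑ i, y i * α i = y ⬝ᵥ α := rfl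
  rw [hdist, hyh, hyα]
  simp only [sub_mulVec, vecMulVec_mulVec, smul_mulVec, one_mulVec, dotProduct_sub,
    dotProduct_smul, sub_dotProduct, smul_dotProduct, smul_eq_mul, MulOpposite.smul_eq_mul_unop,
    MulOpposite.unop_op, dotProduct_comm yh, dotProduct_comm α]
  ring

lemma expandedQuadratic_eq_dotProduct_mulVec_add (lam β η s : ℝ) (α yh y : n → ℝ) :
    (∑ i, ∑ j, y i * ((α i * α j) - lam * (if i = j then (1:ℝ) else 0)) * y j)
        + (∑ i, (2 * lam * yh i - (2 * β + η) * α i) * y i)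
        + β ^ 2 - lam * (∑ i, (yh i) ^ 2) - s =
      y ⬝ᵥ (vecMulVec α α - lam • 1) *ᵥ y + 2 * ((lam • yh - (β + η / 2) • α) ⬝ᵥ y)
        + (β ^ 2 - lam * (∑ i, (yh i) ^ 2) - s) := by
  have hquad : ∑ i, ∑ j, y i * ((α i * α j) - lam * (if i = j then (1:ℝ) else 0)) * y j =
      y ⬝ᵥ (vecMulVec α α - lam • 1) *ᵥ y := by
    simp [dotProduct, mulVec, Finset.mul_sum, vecMulVec_apply, one_apply, mul_assoc]
  have hlin : ∑ i, (2 * lam * yh i - (2 * β + η) * α i) * y i =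
      2 * ((lam • yh - (β + η / 2) • α) ⬝ᵥ y) := by
    simp only [dotProduct, Finset.mul_sum, Pi.sub_apply, Pi.smul_apply, smul_eq_mul]
    exact Finset.sum_congr rfl fun i _ => by ring
  rw [hquad, hlin]
  ring

end MeanVariance

theorem stmt14_general {m : ℕ} (lam : ℝ) (α yh : Fin m → ℝ)
    (β η s : ℝ) :
    ((∀ y : Fin m → ℝ,
        ((∑ i, y i * α i) - β) ^ 2 - η * (∑ i, y i * α i)
          - lam * (∑ i, (y i - yh i) ^ 2) ≤ s) ↔
      (∀ y : Fin m → ℝ,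
        (∑ i, ∑ j, y i * ((α i * α j) - lam * (if i = j then (1:ℝ) else 0)) * y j)
          + (∑ i, (2 * lam * yh i - (2 * β + η) * α i) * y i)
          + β ^ 2 - lam * (∑ i, (yh i) ^ 2) - s ≤ 0)) ∧
    ((∀ y : Fin m → ℝ,
        (∑ i, ∑ j, y i * ((α i * α j) - lam * (if i = j then (1:ℝ) else 0)) * y j)
          + (∑ i, (2 * lam * yh i - (2 * β + η) * α i) * y i)
          + β ^ 2 - lam * (∑ i, (yh i) ^ 2) - s ≤ 0) ↔
      (Matrix.fromBlocks
        (lam • (1 : Matrix (Fin m) (Fin m) ℝ) - Matrix.vecMulVec α α)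
        (Matrix.of fun i (_ : Fin 1) => (β + η / 2) * α i - lam * yh i)
        (Matrix.of fun (_ : Fin 1) j => (β + η / 2) * α j - lam * yh j)
        (Matrix.of fun (_ : Fin 1) (_ : Fin 1) =>
          s + lam * (∑ i, (yh i) ^ 2) - β ^ 2)).PosSemidef) := by
  have hM : (vecMulVec α α - lam • (1 : Matrix (Fin m) (Fin m) ℝ)).IsHermitian := by
    refine IsHermitian.sub ?_ (isHermitian_one.smul (IsSelfAdjoint.all lam))
    simpa using (posSemidef_vecMulVec_self_star α).isHermitian
  refine ⟨forall_congr' fun y => ?_, ?_⟩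
  · rw [← sub_nonpos, meanVariance_sub_eq_dotProduct_mulVec_add,
      expandedQuadratic_eq_dotProduct_mulVec_add]
  · simp only [expandedQuadratic_eq_dotProduct_mulVec_add]
    convert (posSemidef_fromBlocks_neg_iff _ hM _ _).symm using 2
    rw [neg_sub]
    congr 2 <;> ext <;> simp only [Pi.sub_apply, Pi.smul_apply, smul_eq_mul, neg_sub]
    ring

/-- The semi-infinite mean-variance constraint is equivalent to a quadratic form
being nonpositive everywhere, which in turn is equivalent to positive
semi-definiteness of the associated `(m+1)×(m+1)` block matrix. -/
theorem stmt14 {m : ℕ} (lam : ℝ) (hlam : 0 < lam) (α yh : Fin m → ℝ)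
    (β η s : ℝ) (hη : 0 ≤ η) :
    ((∀ y : Fin m → ℝ,
        ((∑ i, y i * α i) - β) ^ 2 - η * (∑ i, y i * α i)
          - lam * (∑ i, (y i - yh i) ^ 2) ≤ s) ↔
      (∀ y : Fin m → ℝ,
        (∑ i, ∑ j, y i * ((α i * α j) - lam * (if i = j then (1:ℝ) else 0)) * y j)
          + (∑ i, (2 * lam * yh i - (2 * β + η) * α i) * y i)
          + β ^ 2 - lam * (∑ i, (yh i) ^ 2) - s ≤ 0)) ∧
    ((∀ y : Fin m → ℝ,
        (∑ i, ∑ j, y i * ((α i * α j) - lam * (if i = j then (1:ℝ) else 0)) * y j)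
          + (∑ i, (2 * lam * yh i - (2 * β + η) * α i) * y i)
          + β ^ 2 - lam * (∑ i, (yh i) ^ 2) - s ≤ 0) ↔
      (Matrix.fromBlocks
        (lam • (1 : Matrix (Fin m) (Fin m) ℝ) - Matrix.vecMulVec α α)
        (Matrix.of fun i (_ : Fin 1) => (β + η / 2) * α i - lam * yh i)
        (Matrix.of fun (_ : Fin 1) j => (β + η / 2) * α j - lam * yh j)
        (Matrix.of fun (_ : Fin 1) (_ : Fin 1) =>
          s + lam * (∑ i, (yh i) ^ 2) - β ^ 2)).PosSemidef) :=
  stmt14_general lam α yh β η s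
end
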